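/- arXiv:2507.04771 — 5 statements merged into one kernel-verified Lean document; each statement's English description precedes it below -/
import Mathlib

section
/- If κ₁ satisfies ε₁-differential privacy and κ₂ satisfies ε₂-differential privacy, and they are run independently on the same dataset, then the joint mechanism D ↦ (κ₁(D), κ₂(D)) satisfies (ε₁ + ε₂)-differential privacy (sequential composition). -/
/-! A mechanism is ε-DP exactly when `κ d₁ ≤ e^ε • κ d₂` as measures for neighbours `d₁, d₂`.
Such domination is preserved by products, with the constants multiplying, and
`e^ε₁ * e^ε₂ = e^(ε₁ + ε₂)`. -/

open MeasureTheory

def DP {D Ω : Type*} [MeasurableSpace Ω] (neighbor : D → D → Prop)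
    (κ : D → Measure Ω) (ε : ℝ) : Prop :=
  ∀ d₁ d₂, neighbor d₁ d₂ → ∀ S : Set Ω, MeasurableSet S →
    κ d₁ S ≤ ENNReal.ofReal (Real.exp ε) * κ d₂ S

namespace MeasureTheory.Measure

theorem prod_le_smul_prod {α β : Type*} [MeasurableSpace α] [MeasurableSpace β]
    {μ₁ μ₂ : Measure α} {ν₁ ν₂ : Measure β} [SFinite ν₂] {a b : ENNReal}
    (hμ : μ₁ ≤ a • μ₂) (hν : ν₁ ≤ b • ν₂) :
    μ₁.prod ν₁ ≤ (a * b) • μ₂.prod ν₂ :=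
  calc μ₁.prod ν₁ ≤ (a • μ₂).prod (b • ν₂) := prod_mono hμ hν
    _ = (a * b) • μ₂.prod ν₂ := by rw [prod_smul_left, prod_smul_right, smul_smul]

end MeasureTheory.Measure

section DP

variable {D Ω Ω' : Type*} [MeasurableSpace Ω] [MeasurableSpace Ω']
  {neighbor : D → D → Prop} {κ : D → Measure Ω} {ε : ℝ}

theorem dp_iff_le_smul :
    DP neighbor κ ε ↔
      ∀ d₁ d₂, neighbor d₁ d₂ → κ d₁ ≤ ENNReal.ofReal (Real.exp ε) • κ d₂ := by
  simp only [DP, Measure.le_iff, Measure.smul_apply, smul_eq_mul]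

theorem DP.prod {κ' : D → Measure Ω'} [∀ d, SFinite (κ' d)] {ε' : ℝ}
    (h : DP neighbor κ ε) (h' : DP neighbor κ' ε') :
    DP neighbor (fun d => (κ d).prod (κ' d)) (ε + ε') := by
  rw [dp_iff_le_smul] at h h' ⊢
  intro d₁ d₂ hn
  rw [Real.exp_add, ENNReal.ofReal_mul (Real.exp_nonneg ε)]
  exact Measure.prod_le_smul_prod (h d₁ d₂ hn) (h' d₁ d₂ hn)

end DP

theorem dp_sequential_composition_general {D Ω₁ Ω₂ : Type*}
    [MeasurableSpace Ω₁] [MeasurableSpace Ω₂]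
    (neighbor : D → D → Prop)
    (κ₁ : D → Measure Ω₁) (κ₂ : D → Measure Ω₂) (ε₁ ε₂ : ℝ)
    (hprob₂ : ∀ d, IsProbabilityMeasure (κ₂ d))
    (h₁ : DP neighbor κ₁ ε₁) (h₂ : DP neighbor κ₂ ε₂) :
    DP neighbor (fun d => (κ₁ d).prod (κ₂ d)) (ε₁ + ε₂) :=
  have := hprob₂
  h₁.prod h₂

/-- Sequential composition: the joint mechanism of two independent mechanisms
(the product of the two output distributions) satisfies (ε₁+ε₂)-DP. -/
theorem dp_sequential_composition {D Ω₁ Ω₂ : Type*}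
    [MeasurableSpace Ω₁] [MeasurableSpace Ω₂]
    (neighbor : D → D → Prop)
    (κ₁ : D → Measure Ω₁) (κ₂ : D → Measure Ω₂) (ε₁ ε₂ : ℝ)
    (hprob₁ : ∀ d, IsProbabilityMeasure (κ₁ d))
    (hprob₂ : ∀ d, IsProbabilityMeasure (κ₂ d))
    (h₁ : DP neighbor κ₁ ε₁) (h₂ : DP neighbor κ₂ ε₂) :
    DP neighbor (fun d => (κ₁ d).prod (κ₂ d)) (ε₁ + ε₂) :=
  dp_sequential_composition_general neighbor κ₁ κ₂ ε₁ ε₂ hprob₂ h₁ h₂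
end

section
/- The Laplace mechanism κ(D) = f(D) + Lap(Δf/ε), where Lap(b) denotes Laplace noise with scale b and Δf is the ℓ₁ global sensitivity of f, satisfies ε-differential privacy. -/
open MeasureTheory

/-!
Moving the centre of a Laplace density of scale `b` by `δ` changes the exponent `-|x - m| / b`
by at most `δ / b` (triangle inequality), so the two densities differ pointwise by a factor of at
most `exp (δ / b)`. With `b = Δf / ε` and `δ ≤ Δf` this factor is at most `exp ε`, and a
pointwise bound between densities integrates to the same bound between the measures.
-/

theorem dp_iff_forall_le_smul {D Ω : Type*} [MeasurableSpace Ω] {neighbor : D → D → Prop}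
    {κ : D → Measure Ω} {ε : ℝ} :
    DP neighbor κ ε ↔
      ∀ d₁ d₂, neighbor d₁ d₂ → κ d₁ ≤ ENNReal.ofReal (Real.exp ε) • κ d₂ := by
  simp only [DP, Measure.le_iff, Measure.smul_apply, smul_eq_mul]

theorem withDensity_le_smul_withDensity {α : Type*} [MeasurableSpace α] {μ : Measure α}
    {f g : α → ENNReal} {c : ENNReal} (hc : c ≠ ⊤) (hfg : ∀ᵐ x ∂μ, f x ≤ c * g x) :
    μ.withDensity f ≤ c • μ.withDensity g := by
  rw [← withDensity_smul' c g hc]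
  exact withDensity_mono hfg

noncomputable def laplacePDF (m b x : ℝ) : ℝ :=
  1 / (2 * b) * Real.exp (-|x - m| / b)

theorem laplacePDF_le_exp_mul {m₁ m₂ b ε : ℝ} (hε : 0 < ε) (hm : |m₁ - m₂| ≤ ε * b) (x : ℝ) :
    laplacePDF m₁ b x ≤ Real.exp ε * laplacePDF m₂ b x := by
  have hb : 0 ≤ b := nonneg_of_mul_nonneg_right ((abs_nonneg _).trans hm) hε
  have hexp : -|x - m₁| / b ≤ ε + -|x - m₂| / b := by
    have htri : |x - m₂| - |x - m₁| ≤ |m₁ - m₂| := by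
      simpa using abs_sub_abs_le_abs_sub (x - m₂) (x - m₁)
    have hdiv : (|x - m₂| - |x - m₁|) / b ≤ ε := div_le_of_le_mul₀ hb hε.le (htri.trans hm)
    rw [sub_div] at hdiv
    rw [neg_div, neg_div]
    linarith
  calc laplacePDF m₁ b x ≤ 1 / (2 * b) * Real.exp (ε + -|x - m₂| / b) := by
        unfold laplacePDF; gcongr
    _ = Real.exp ε * laplacePDF m₂ b x := by
        rw [Real.exp_add, laplacePDF]; ring

theorem laplace_mechanism_dp_general {D : Type*} (neighbor : D → D → Prop)
    (f : D → ℝ) (ε Δf : ℝ) (hε : 0 < ε)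
    (hsens : ∀ d₁ d₂, neighbor d₁ d₂ → |f d₁ - f d₂| ≤ Δf) :
    DP neighbor
      (fun d => volume.withDensity fun x =>
        ENNReal.ofReal ((1 / (2 * (Δf / ε))) * Real.exp (-|x - f d| / (Δf / ε))))
      ε := by
  refine dp_iff_forall_le_smul.mpr fun d₁ d₂ hnb =>
    withDensity_le_smul_withDensity ENNReal.ofReal_ne_top (ae_of_all _ fun x => ?_)
  have hm : |f d₁ - f d₂| ≤ ε * (Δf / ε) := by
    rw [mul_div_cancel₀ Δf hε.ne']
    exact hsens d₁ d₂ hnb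
  rw [← ENNReal.ofReal_mul (Real.exp_nonneg ε)]
  exact ENNReal.ofReal_le_ofReal (laplacePDF_le_exp_mul hε hm x)

/-- The Laplace mechanism `κ(D) = f(D) + Lap(Δf/ε)`, realized as the measure
whose density at `x` is the Laplace density with scale `b = Δf/ε` centered at
`f(D)`, satisfies ε-differential privacy. -/
theorem laplace_mechanism_dp {D : Type*} (neighbor : D → D → Prop)
    (f : D → ℝ) (ε Δf : ℝ) (hε : 0 < ε) (hΔf : 0 < Δf)
    (hsens : ∀ d₁ d₂, neighbor d₁ d₂ → |f d₁ - f d₂| ≤ Δf) :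
    DP neighbor
      (fun d => volume.withDensity fun x =>
        ENNReal.ofReal ((1 / (2 * (Δf / ε))) * Real.exp (-|x - f d| / (Δf / ε))))
      ε :=
  laplace_mechanism_dp_general neighbor f ε Δf hε hsens
end

section
/- The exponential mechanism, which on dataset D outputs r ∈ R with probability proportional to exp(ε·u(D,r)/(2Δu)), satisfies ε-differential privacy, where Δu is the sensitivity of the utility function u. -/
/-- The exponential mechanism over a finite output set `R`, which outputs `r`
with probability proportional to `exp(ε·u(D,r)/(2Δu))`, satisfies ε-DP:
for all neighboring datasets and every set `S ⊆ R` of outputs, the probability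
of landing in `S` changes by at most a factor `exp ε`. -/
theorem exponential_mechanism_dp {D R : Type*} [Fintype R] [Nonempty R]
    (neighbor : D → D → Prop) (u : D → R → ℝ) (ε Δu : ℝ)
    (hε : 0 < ε) (hΔu : 0 < Δu)
    (hsens : ∀ d₁ d₂ r, neighbor d₁ d₂ → |u d₁ r - u d₂ r| ≤ Δu)
    (prob : D → R → ℝ)
    (hprob : ∀ d r, prob d r =
      Real.exp (ε * u d r / (2 * Δu)) / ∑ r' : R, Real.exp (ε * u d r' / (2 * Δu))) :
    ∀ d₁ d₂, neighbor d₁ d₂ → ∀ S : Finset R,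
      ∑ r ∈ S, prob d₁ r ≤ Real.exp ε * ∑ r ∈ S, prob d₂ r := by
  intro d₁ d₂ hn S
  have hpos : ∀ d : D, 0 < ∑ r' : R, Real.exp (ε * u d r' / (2 * Δu)) :=
    fun d => Finset.sum_pos (fun _ _ => Real.exp_pos _) Finset.univ_nonempty
  have hexp : ∀ r : R, Real.exp (ε * u d₁ r / (2 * Δu)) ≤
      Real.exp (ε / 2) * Real.exp (ε * u d₂ r / (2 * Δu)) := by
    intro r
    rw [← Real.exp_add, Real.exp_le_exp]
    have h := (abs_le.1 (hsens d₁ d₂ r hn)).2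
    rw [div_le_iff₀ (by positivity), add_mul, div_mul_cancel₀ _ (by positivity : (2:ℝ)*Δu ≠ 0)]
    nlinarith
  have hexp' : ∀ r : R, Real.exp (ε * u d₂ r / (2 * Δu)) ≤
      Real.exp (ε / 2) * Real.exp (ε * u d₁ r / (2 * Δu)) := by
    intro r
    rw [← Real.exp_add, Real.exp_le_exp]
    have h := (abs_le.1 (hsens d₁ d₂ r hn)).1
    rw [div_le_iff₀ (by positivity), add_mul, div_mul_cancel₀ _ (by positivity : (2:ℝ)*Δu ≠ 0)]
    nlinarith
  have hden : ∑ r' : R, Real.exp (ε * u d₂ r' / (2 * Δu)) ≤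
      Real.exp (ε / 2) * ∑ r' : R, Real.exp (ε * u d₁ r' / (2 * Δu)) := by
    rw [Finset.mul_sum]
    exact Finset.sum_le_sum fun r _ => hexp' r
  have key : ∀ r : R, prob d₁ r ≤ Real.exp ε * prob d₂ r := by
    intro r
    rw [hprob, hprob]
    have h1 : (∑ r' : R, Real.exp (ε * u d₁ r' / (2 * Δu)))⁻¹ ≤
        Real.exp (ε / 2) * (∑ r' : R, Real.exp (ε * u d₂ r' / (2 * Δu)))⁻¹ := by
      rw [← div_eq_mul_inv, le_div_iff₀ (hpos d₂), inv_mul_eq_div, div_le_iff₀ (hpos d₁)]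
      linarith [hden]
    calc Real.exp (ε * u d₁ r / (2 * Δu)) / ∑ r' : R, Real.exp (ε * u d₁ r' / (2 * Δu))
        = Real.exp (ε * u d₁ r / (2 * Δu)) *
          (∑ r' : R, Real.exp (ε * u d₁ r' / (2 * Δu)))⁻¹ := by rw [div_eq_mul_inv]
      _ ≤ (Real.exp (ε / 2) * Real.exp (ε * u d₂ r / (2 * Δu))) *
          (Real.exp (ε / 2) * (∑ r' : R, Real.exp (ε * u d₂ r' / (2 * Δu)))⁻¹) := by
          apply mul_le_mul (hexp r) h1 (by positivity)
          positivity
      _ = Real.exp ε *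
          (Real.exp (ε * u d₂ r / (2 * Δu)) / ∑ r' : R, Real.exp (ε * u d₂ r' / (2 * Δu))) := by
          have he : Real.exp (ε / 2) * Real.exp (ε / 2) = Real.exp ε := by
            rw [← Real.exp_add]; ring_nf
          rw [mul_mul_mul_comm, he]; simp only [div_eq_mul_inv]
  calc ∑ r ∈ S, prob d₁ r ≤ ∑ r ∈ S, Real.exp ε * prob d₂ r :=
        Finset.sum_le_sum fun r _ => key r
    _ = Real.exp ε * ∑ r ∈ S, prob d₂ r := (Finset.mul_sum _ _ _).symm
end

section
/- Adaptive sequential composition: if κ₁ satisfies ε₁-DP, and κ₂ is a family of mechanisms indexed by the output of κ₁ such that for each fixed output value y, the mechanism D ↦ κ₂(y, D) satisfies ε₂-DP, then the mechanism D ↦ (let y = κ₁(D); (y, κ₂(y, D))) satisfies (ε₁ + ε₂)-differential privacy. -/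
/-!
On a discrete output space the set-wise DP bound is equivalent to the pointwise one on the mass
function. The composed mechanism puts mass `κ₁ d y * κ₂ y d z` on `(y, z)`, so the pointwise
factors `exp ε₁` and `exp ε₂` simply multiply.
-/

/-- ε-DP for discrete (countable-output) mechanisms given as probability mass
functions: for every set S of outputs, the probability mass of S changes by at
most a factor `exp ε` between neighboring datasets. -/
def PMFDP {D Y : Type*} (neighbor : D → D → Prop) (κ : D → PMF Y) (ε : ℝ) : Prop :=
  ∀ d₁ d₂, neighbor d₁ d₂ → ∀ S : Set Y,
    ∑' y : S, κ d₁ y ≤ ENNReal.ofReal (Real.exp ε) * ∑' y : S, κ d₂ y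

theorem pmfdp_iff_forall_apply_le {D Y : Type*} {neighbor : D → D → Prop} {κ : D → PMF Y}
    {ε : ℝ} :
    PMFDP neighbor κ ε ↔
      ∀ d₁ d₂, neighbor d₁ d₂ → ∀ y, κ d₁ y ≤ ENNReal.ofReal (Real.exp ε) * κ d₂ y := by
  constructor
  · intro h d₁ d₂ hn y
    simpa only [tsum_singleton] using h d₁ d₂ hn {y}
  · intro h d₁ d₂ hn S
    calc ∑' y : S, κ d₁ y
        ≤ ∑' y : S, ENNReal.ofReal (Real.exp ε) * κ d₂ y :=
          ENNReal.tsum_le_tsum fun y => h d₁ d₂ hn y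
      _ = ENNReal.ofReal (Real.exp ε) * ∑' y : S, κ d₂ y := ENNReal.tsum_mul_left

theorem PMF.bind_map_prodMk_apply {Y Z : Type*} (p : PMF Y) (q : Y → PMF Z) (x : Y × Z) :
    (p.bind fun y => (q y).map (Prod.mk y)) x = p x.1 * q x.1 x.2 := by
  classical
  obtain ⟨y, z⟩ := x
  simp only [PMF.bind_apply, PMF.map_apply, Prod.mk.injEq, eq_comm (a := y), eq_comm (a := z),
    and_comm (b := _ = z), ite_and, tsum_ite_eq, mul_ite, mul_zero]

theorem dp_adaptive_composition_general {D Y Z : Type*}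
    (neighbor : D → D → Prop)
    (κ₁ : D → PMF Y) (κ₂ : Y → D → PMF Z) (ε₁ ε₂ : ℝ)
    (h₁ : PMFDP neighbor κ₁ ε₁)
    (h₂ : ∀ y : Y, PMFDP neighbor (κ₂ y) ε₂) :
    PMFDP neighbor
      (fun d => (κ₁ d).bind fun y => (κ₂ y d).map fun z => (y, z)) (ε₁ + ε₂) := by
  simp_rw [pmfdp_iff_forall_apply_le] at h₁ h₂ ⊢
  intro d₁ d₂ hn x
  simp only [PMF.bind_map_prodMk_apply, Real.exp_add,
    ENNReal.ofReal_mul (Real.exp_nonneg _)]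
  calc κ₁ d₁ x.1 * κ₂ x.1 d₁ x.2
      ≤ (ENNReal.ofReal (Real.exp ε₁) * κ₁ d₂ x.1) *
          (ENNReal.ofReal (Real.exp ε₂) * κ₂ x.1 d₂ x.2) :=
        mul_le_mul' (h₁ d₁ d₂ hn x.1) (h₂ x.1 d₁ d₂ hn x.2)
    _ = _ := by ring

/-- Adaptive sequential composition: if κ₁ is ε₁-DP and, for each fixed output
y of κ₁, the mechanism `D ↦ κ₂ y D` is ε₂-DP, then the adaptively composed
mechanism releasing `(y, κ₂(y, D))` is (ε₁+ε₂)-DP. -/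
theorem dp_adaptive_composition {D Y Z : Type*} [Countable Y] [Countable Z]
    (neighbor : D → D → Prop)
    (κ₁ : D → PMF Y) (κ₂ : Y → D → PMF Z) (ε₁ ε₂ : ℝ)
    (h₁ : PMFDP neighbor κ₁ ε₁)
    (h₂ : ∀ y : Y, PMFDP neighbor (κ₂ y) ε₂) :
    PMFDP neighbor
      (fun d => (κ₁ d).bind fun y => (κ₂ y d).map fun z => (y, z)) (ε₁ + ε₂) :=
  dp_adaptive_composition_general neighbor κ₁ κ₂ ε₁ ε₂ h₁ h₂
end

section
/- For the exponential mechanism over a finite output set R with utility u and sensitivity Δu, the probability ratio of outputting any fixed r on neighboring datasets D₁, D₂ satisfies Pr(κ(D₁) = r)/Pr(κ(D₂) = r) ≤ exp(ε), where κ(D) outputs r with probability exp(ε·u(D,r)/(2Δu)) / Σ_{r'} exp(ε·u(D,r')/(2Δu)). -/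
/-- Pointwise ratio bound for the exponential mechanism: on neighboring
datasets, the probability of outputting any fixed `r` changes by at most a
factor `exp ε`. -/
theorem exponential_mechanism_pointwise {D R : Type*} [Fintype R] [Nonempty R]
    (neighbor : D → D → Prop) (u : D → R → ℝ) (ε Δu : ℝ)
    (hε : 0 < ε) (hΔu : 0 < Δu)
    (hsens : ∀ d₁ d₂ r, neighbor d₁ d₂ → |u d₁ r - u d₂ r| ≤ Δu)
    (prob : D → R → ℝ)
    (hprob : ∀ d r, prob d r =
      Real.exp (ε * u d r / (2 * Δu)) / ∑ r' : R, Real.exp (ε * u d r' / (2 * Δu))) :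
    ∀ d₁ d₂, neighbor d₁ d₂ → ∀ r : R,
      prob d₁ r ≤ Real.exp ε * prob d₂ r := by
  intro d₁ d₂ hn r
  set S₁ := ∑ r' : R, Real.exp (ε * u d₁ r' / (2 * Δu)) with hS₁
  set S₂ := ∑ r' : R, Real.exp (ε * u d₂ r' / (2 * Δu)) with hS₂
  have hS₁pos : 0 < S₁ := Finset.sum_pos (fun i _ => Real.exp_pos _) Finset.univ_nonempty
  have hS₂pos : 0 < S₂ := Finset.sum_pos (fun i _ => Real.exp_pos _) Finset.univ_nonempty
  -- key pointwise bound: exp(ε u₁/(2Δu)) ≤ exp(ε/2) exp(ε u₂/(2Δu)), both directions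
  have key : ∀ r' : R, Real.exp (ε * u d₁ r' / (2 * Δu)) ≤
      Real.exp (ε / 2) * Real.exp (ε * u d₂ r' / (2 * Δu)) := by
    intro r'
    rw [← Real.exp_add]
    apply Real.exp_le_exp.mpr
    have h := (abs_le.mp (hsens d₁ d₂ r' hn)).2
    have : ε * u d₁ r' / (2 * Δu) - ε * u d₂ r' / (2 * Δu) ≤ ε / 2 := by
      rw [div_sub_div_same, ← mul_sub]
      rw [div_le_div_iff₀ (by positivity) (by norm_num : (0:ℝ) < 2)]
      have : ε * (u d₁ r' - u d₂ r') ≤ ε * Δu :=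
        mul_le_mul_of_nonneg_left h hε.le
      nlinarith
    linarith
  have key2 : ∀ r' : R, Real.exp (ε * u d₂ r' / (2 * Δu)) ≤
      Real.exp (ε / 2) * Real.exp (ε * u d₁ r' / (2 * Δu)) := by
    intro r'
    rw [← Real.exp_add]
    apply Real.exp_le_exp.mpr
    have h := (abs_le.mp (abs_sub_comm (u d₁ r') (u d₂ r') ▸ hsens d₁ d₂ r' hn)).2
    have : ε * u d₂ r' / (2 * Δu) - ε * u d₁ r' / (2 * Δu) ≤ ε / 2 := by
      rw [div_sub_div_same, ← mul_sub]
      rw [div_le_div_iff₀ (by positivity) (by norm_num : (0:ℝ) < 2)]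
      have : ε * (u d₂ r' - u d₁ r') ≤ ε * Δu :=
        mul_le_mul_of_nonneg_left h hε.le
      nlinarith
    linarith
  have hSbound : S₂ ≤ Real.exp (ε / 2) * S₁ := by
    rw [Finset.mul_sum]
    exact Finset.sum_le_sum fun i _ => key2 i
  rw [hprob, hprob]
  rw [div_le_iff₀ hS₁pos]
  have hexp : (0:ℝ) < Real.exp (ε / 2) := Real.exp_pos _
  have h1 : Real.exp (ε * u d₁ r / (2 * Δu)) * S₂ ≤
      (Real.exp (ε / 2) * Real.exp (ε * u d₂ r / (2 * Δu))) * (Real.exp (ε / 2) * S₁) :=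
    mul_le_mul (key r) hSbound hS₂pos.le (by positivity)
  have h2 : Real.exp ε * (Real.exp (ε * u d₂ r / (2 * Δu)) / S₂) * S₁ * S₂ =
      (Real.exp (ε / 2) * Real.exp (ε * u d₂ r / (2 * Δu))) * (Real.exp (ε / 2) * S₁) := by
    have heps : Real.exp ε = Real.exp (ε / 2) * Real.exp (ε / 2) := by
      rw [← Real.exp_add]; ring_nf
    rw [heps]; field_simp
  have := mul_le_mul_of_nonneg_right (le_refl (Real.exp (ε * u d₁ r / (2 * Δu)))) hS₂pos.le
  nlinarith [mul_pos hS₁pos hS₂pos, Real.exp_pos (ε * u d₁ r / (2 * Δu))]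
end
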